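/- Let U_C ∈ ℝ^{m×c} and V_R ∈ ℝ^{n×r} have orthonormal columns, and suppose P = U_C U_Cᵀ is left SF(ε,k) for A and Q = V_R V_Rᵀ is right SF(ε,k) for A. Then min_X ‖A − U_C X V_Rᵀ‖_F ≤ √(1+4ε) · ‖A − A_k‖_F, where the minimum is over all c×r matrices X. -/

import Mathlib

open Matrix BigOperators

/-- Frobenius norm of a real matrix. -/
noncomputable def frob {m n : ℕ} (A : Matrix (Fin m) (Fin n) ℝ) : ℝ :=
  Real.sqrt (∑ i, ∑ j, (A i j) ^ 2)

/-- Spectral (operator ℓ2→ℓ2) norm of a real matrix. -/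
noncomputable def spec {m n : ℕ} (A : Matrix (Fin m) (Fin n) ℝ) : ℝ :=
  ‖LinearMap.toContinuousLinearMap (Matrix.toEuclideanLin A)‖

/-- `B` is the Moore–Penrose pseudoinverse of `A` (four Penrose conditions). -/
def IsMPInv {m n : ℕ} (A : Matrix (Fin m) (Fin n) ℝ) (B : Matrix (Fin n) (Fin m) ℝ) : Prop :=
  A * B * A = A ∧ B * A * B = B ∧ (A * B)ᵀ = A * B ∧ (B * A)ᵀ = B * A

/-! With `P = U_C U_Cᵀ`, `Q = V_R V_Rᵀ` and `X = U_Cᵀ A_k V_R` we have `U_C X V_Rᵀ = P A_k Q` and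
`A - P A_k Q = (A - A_k) + (1 - P) A_k + P A_k (1 - Q)`.
The first two terms are Frobenius-orthogonal because `(A - A_k) V_k V_kᵀ = 0`, and the last two
because `(1 - P) P = 0`. As `A_k` factors through the `k` orthonormal columns of `V_k` (resp.
`U_k`), the squared norms of the last two terms are at most `k ‖(1 - P) A‖₂²` and
`k ‖A (1 - Q)‖₂²`. The remaining cross term `⟨A - A_k, P A_k (1 - Q)⟩` equals
`⟨U_kᵀ P (1 - U_k U_kᵀ) A (1 - Q), U_kᵀ A (1 - Q)⟩`, so by Cauchy–Schwarz it is also at most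
`k ‖A (1 - Q)‖₂²`. The SF conditions bound each of these four contributions by `ε ‖A - A_k‖_F²`. -/

section Frobenius

variable {m n p : ℕ}

lemma frob_nonneg (A : Matrix (Fin m) (Fin n) ℝ) : 0 ≤ frob A := Real.sqrt_nonneg _

lemma frob_sq (A : Matrix (Fin m) (Fin n) ℝ) : frob A ^ 2 = trace (Aᵀ * A) := by
  rw [frob, Real.sq_sqrt (by positivity)]
  simp only [trace, diag, mul_apply, transpose_apply, sq]
  exact Finset.sum_comm

lemma frob_transpose (A : Matrix (Fin m) (Fin n) ℝ) : frob Aᵀ = frob A := by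
  simp only [frob, transpose_apply]
  rw [Finset.sum_comm]

lemma trace_transpose_mul_le_frob_mul_frob (X Y : Matrix (Fin m) (Fin n) ℝ) :
    trace (Xᵀ * Y) ≤ frob X * frob Y := by
  calc trace (Xᵀ * Y) = ∑ i, ∑ j, X i j * Y i j := by
        simp only [trace, diag, mul_apply, transpose_apply]
        exact Finset.sum_comm
    _ ≤ frob X * frob Y := by
        simpa only [frob, Fintype.sum_prod_type] using Real.sum_mul_le_sqrt_mul_sqrt Finset.univ
          (fun x : Fin m × Fin n => X x.1 x.2) (fun x => Y x.1 x.2)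

lemma frob_add_sq (X Y : Matrix (Fin m) (Fin n) ℝ) :
    frob (X + Y) ^ 2 = frob X ^ 2 + 2 * trace (Xᵀ * Y) + frob Y ^ 2 := by
  have hYX : trace (Yᵀ * X) = trace (Xᵀ * Y) := by
    rw [← trace_transpose, transpose_mul, transpose_transpose]
  simp only [frob_sq, transpose_add, Matrix.add_mul, Matrix.mul_add, trace_add, hYX]
  ring

lemma trace_transpose_mul_mul_left (X : Matrix (Fin m) (Fin n) ℝ)
    (M : Matrix (Fin m) (Fin p) ℝ) (Y : Matrix (Fin p) (Fin n) ℝ) :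
    trace (Xᵀ * (M * Y)) = trace ((Mᵀ * X)ᵀ * Y) := by
  rw [transpose_mul, transpose_transpose, Matrix.mul_assoc]

lemma trace_transpose_mul_mul_right (X : Matrix (Fin m) (Fin n) ℝ)
    (Y : Matrix (Fin m) (Fin p) ℝ) (M : Matrix (Fin p) (Fin n) ℝ) :
    trace (Xᵀ * (Y * M)) = trace ((X * Mᵀ)ᵀ * Y) := by
  rw [transpose_mul, transpose_transpose, ← Matrix.mul_assoc, trace_mul_comm, Matrix.mul_assoc]

lemma frob_sq_eq_sum_col (A : Matrix (Fin m) (Fin n) ℝ) :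
    frob A ^ 2 = ∑ j, ‖WithLp.toLp 2 (fun i => A i j)‖ ^ 2 := by
  simp only [frob, EuclideanSpace.norm_sq_eq, Real.norm_eq_abs, sq_abs]
  rw [Real.sq_sqrt (by positivity), Finset.sum_comm]

lemma spec_nonneg (M : Matrix (Fin m) (Fin n) ℝ) : 0 ≤ spec M := norm_nonneg _

lemma spec_transpose (M : Matrix (Fin m) (Fin n) ℝ) : spec Mᵀ = spec M := by
  have := Matrix.l2_opNorm_conjTranspose (𝕜 := ℝ) M
  rwa [conjTranspose_eq_transpose_of_trivial] at this

lemma frob_mul_le_spec_mul_frob (M : Matrix (Fin m) (Fin n) ℝ) (X : Matrix (Fin n) (Fin p) ℝ) :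
    frob (M * X) ≤ spec M * frob X := by
  refine le_of_pow_le_pow_left₀ two_ne_zero (by positivity [spec_nonneg M, frob_nonneg X]) ?_
  rw [mul_pow, frob_sq_eq_sum_col, frob_sq_eq_sum_col, Finset.mul_sum]
  refine Finset.sum_le_sum fun j _ => ?_
  have hcol : (fun i => (M * X) i j) = M *ᵥ fun i => X i j := by
    ext i
    simp only [mul_apply, mulVec, dotProduct]
  rw [hcol, ← mul_pow]
  refine pow_le_pow_left₀ (norm_nonneg _) ?_ 2
  simpa only [spec, LinearMap.coe_toContinuousLinearMap', toLpLin_toLp, toLin'_apply] using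
    (LinearMap.toContinuousLinearMap (toEuclideanLin M)).le_opNorm (WithLp.toLp 2 _)

lemma frob_mul_le_frob_mul_spec (X : Matrix (Fin m) (Fin n) ℝ) (M : Matrix (Fin n) (Fin p) ℝ) :
    frob (X * M) ≤ frob X * spec M := by
  rw [← frob_transpose, transpose_mul, ← frob_transpose X, ← spec_transpose M, mul_comm]
  exact frob_mul_le_spec_mul_frob _ _

section Orthonormal

variable {U : Matrix (Fin m) (Fin p) ℝ}

lemma frob_sq_of_orthonormal (hU : Uᵀ * U = 1) : frob U ^ 2 = p := by
  rw [frob_sq, hU, trace_one, Fintype.card_fin]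

lemma frob_mul_of_orthonormal (hU : Uᵀ * U = 1) (X : Matrix (Fin p) (Fin n) ℝ) :
    frob (U * X) = frob X := by
  rw [← pow_left_inj₀ (frob_nonneg _) (frob_nonneg _) two_ne_zero, frob_sq, frob_sq,
    transpose_mul, Matrix.mul_assoc, ← Matrix.mul_assoc Uᵀ, hU, Matrix.one_mul]

lemma frob_mul_transpose_of_orthonormal (hU : Uᵀ * U = 1) (X : Matrix (Fin n) (Fin p) ℝ) :
    frob (X * Uᵀ) = frob X := by
  rw [← frob_transpose, transpose_mul, transpose_transpose, frob_mul_of_orthonormal hU,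
    frob_transpose]

lemma frob_sq_transpose_mul_le_of_orthonormal (hU : Uᵀ * U = 1) (M : Matrix (Fin m) (Fin n) ℝ) :
    frob (Uᵀ * M) ^ 2 ≤ p * spec M ^ 2 := by
  rw [← frob_sq_of_orthonormal hU, ← frob_transpose U, ← mul_pow]
  exact pow_le_pow_left₀ (frob_nonneg _) (frob_mul_le_frob_mul_spec _ _) 2

lemma frob_sq_mul_le_of_orthonormal (hU : Uᵀ * U = 1) (M : Matrix (Fin n) (Fin m) ℝ) :
    frob (M * U) ^ 2 ≤ p * spec M ^ 2 := by
  rw [← frob_sq_of_orthonormal hU, ← mul_pow, mul_comm]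
  exact pow_le_pow_left₀ (frob_nonneg _) (frob_mul_le_spec_mul_frob _ _) 2

lemma isStarProjection_mul_transpose_of_orthonormal (hU : Uᵀ * U = 1) :
    IsStarProjection (U * Uᵀ) where
  isIdempotentElem := by
    rw [IsIdempotentElem, Matrix.mul_assoc, ← Matrix.mul_assoc Uᵀ, hU, Matrix.one_mul]
  isSelfAdjoint := by
    rw [IsSelfAdjoint, star_eq_conjTranspose, conjTranspose_eq_transpose_of_trivial,
      transpose_mul, transpose_transpose]

end Orthonormal

lemma IsStarProjection.transpose_eq {P : Matrix (Fin m) (Fin m) ℝ} (hP : IsStarProjection P) :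
    Pᵀ = P := by
  rw [← conjTranspose_eq_transpose_of_trivial, ← star_eq_conjTranspose, hP.isSelfAdjoint.star_eq]

lemma IsStarProjection.trace_transpose_one_sub_mul_mul_mul_eq_zero {P : Matrix (Fin m) (Fin m) ℝ}
    (hP : IsStarProjection P) (X Y : Matrix (Fin m) (Fin n) ℝ) :
    trace (((1 - P) * X)ᵀ * (P * Y)) = 0 := by
  rw [trace_transpose_mul_mul_left, hP.transpose_eq, ← Matrix.mul_assoc, hP.mul_one_sub_self,
    Matrix.zero_mul, transpose_zero, Matrix.zero_mul, trace_zero]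

lemma IsStarProjection.frob_mul_le {P : Matrix (Fin m) (Fin m) ℝ} (hP : IsStarProjection P)
    (X : Matrix (Fin m) (Fin n) ℝ) : frob (P * X) ≤ frob X := by
  have hsplit := frob_add_sq ((1 - P) * X) (P * X)
  rw [← Matrix.add_mul, sub_add_cancel, Matrix.one_mul,
    hP.trace_transpose_one_sub_mul_mul_mul_eq_zero] at hsplit
  refine le_of_pow_le_pow_left₀ two_ne_zero (frob_nonneg X) ?_
  nlinarith [sq_nonneg (frob ((1 - P) * X))]

end Frobenius

section LowRank

variable {m n k p : ℕ} {A Ak : Matrix (Fin m) (Fin n) ℝ} {Uk : Matrix (Fin m) (Fin k) ℝ}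
  {Vk : Matrix (Fin n) (Fin k) ℝ} {P : Matrix (Fin m) (Fin m) ℝ} {Q : Matrix (Fin n) (Fin n) ℝ}

lemma frob_sq_mul_lowRank_le (hVk : Vkᵀ * Vk = 1) (hAkV : Ak = A * (Vk * Vkᵀ))
    (M : Matrix (Fin p) (Fin m) ℝ) : frob (M * Ak) ^ 2 ≤ k * spec (M * A) ^ 2 := by
  rw [hAkV, ← Matrix.mul_assoc, ← Matrix.mul_assoc, frob_mul_transpose_of_orthonormal hVk]
  exact frob_sq_mul_le_of_orthonormal hVk _

lemma frob_sq_lowRank_mul_le (hUk : Ukᵀ * Uk = 1) (hAkU : Ak = Uk * Ukᵀ * A)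
    (M : Matrix (Fin n) (Fin p) ℝ) : frob (Ak * M) ^ 2 ≤ k * spec (A * M) ^ 2 := by
  have hfac : Ak * M = Uk * (Ukᵀ * A * M) := by rw [hAkU]; simp only [Matrix.mul_assoc]
  rw [hfac, frob_mul_of_orthonormal hUk, Matrix.mul_assoc]
  exact frob_sq_transpose_mul_le_of_orthonormal hUk _

lemma trace_transpose_sub_lowRank_mul_lowRank_eq_zero (hVk : Vkᵀ * Vk = 1)
    (hAkV : Ak = A * (Vk * Vkᵀ)) (M : Matrix (Fin m) (Fin m) ℝ) :
    trace ((A - Ak)ᵀ * (M * Ak)) = 0 := by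
  have hV : (A - Ak) * (Vk * Vkᵀ)ᵀ = 0 := by
    rw [transpose_mul, transpose_transpose, hAkV, Matrix.sub_mul, Matrix.mul_assoc,
      Matrix.mul_assoc Vk, ← Matrix.mul_assoc Vkᵀ, hVk, Matrix.one_mul, sub_self]
  have hfac : M * Ak = M * A * (Vk * Vkᵀ) := by rw [hAkV, Matrix.mul_assoc]
  rw [hfac, trace_transpose_mul_mul_right, hV, transpose_zero, Matrix.zero_mul, trace_zero]

lemma trace_transpose_sub_lowRank_mul_proj_le (hUk : Ukᵀ * Uk = 1) (hAkU : Ak = Uk * Ukᵀ * A)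
    (hP : IsStarProjection P) (hQ : IsStarProjection Q) :
    trace ((A - Ak)ᵀ * (P * Ak * (1 - Q))) ≤ k * spec (A * (1 - Q)) ^ 2 := by
  set N := Ukᵀ * A * (1 - Q) with hN
  set G := Ukᵀ * P * (1 - Uk * Ukᵀ) * (A * (1 - Q)) with hG
  have hNQ : N * (1 - Q) = N := by
    rw [hN, Matrix.mul_assoc, hQ.one_sub.isIdempotentElem.eq]
  have hGN : trace ((A - Ak)ᵀ * (P * Ak * (1 - Q))) = trace (Gᵀ * N) := by
    have hfac : P * Ak * (1 - Q) = P * Uk * (N * (1 - Q)) := by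
      rw [hNQ, hN, hAkU]; simp only [Matrix.mul_assoc]
    have hD : A - Ak = (1 - Uk * Ukᵀ) * A := by rw [hAkU, Matrix.sub_mul, Matrix.one_mul]
    rw [hfac, trace_transpose_mul_mul_left, trace_transpose_mul_mul_right,
      hQ.one_sub.transpose_eq, hD, hG]
    simp only [transpose_mul, hP.transpose_eq, transpose_transpose, Matrix.mul_assoc]
  have hNsq : frob N ^ 2 ≤ k * spec (A * (1 - Q)) ^ 2 := by
    rw [hN, Matrix.mul_assoc]
    exact frob_sq_transpose_mul_le_of_orthonormal hUk _
  have hGsq : frob G ^ 2 ≤ k * spec (A * (1 - Q)) ^ 2 := by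
    have hUkUk := (isStarProjection_mul_transpose_of_orthonormal hUk).one_sub
    have hleft : frob (Ukᵀ * P * (1 - Uk * Ukᵀ)) ≤ frob Uk := by
      rw [← frob_transpose, transpose_mul, transpose_mul, transpose_transpose, hP.transpose_eq,
        hUkUk.transpose_eq]
      exact (hUkUk.frob_mul_le _).trans (hP.frob_mul_le _)
    rw [← frob_sq_of_orthonormal hUk, ← mul_pow]
    exact pow_le_pow_left₀ (frob_nonneg _) ((frob_mul_le_frob_mul_spec _ _).trans
      (mul_le_mul_of_nonneg_right hleft (spec_nonneg _))) 2
  rw [hGN]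
  nlinarith [trace_transpose_mul_le_frob_mul_frob G N, sq_nonneg (frob G - frob N)]

theorem frob_sq_sub_proj_mul_lowRank_mul_proj_le (hUk : Ukᵀ * Uk = 1) (hVk : Vkᵀ * Vk = 1)
    (hAkU : Ak = Uk * Ukᵀ * A) (hAkV : Ak = A * (Vk * Vkᵀ))
    (hP : IsStarProjection P) (hQ : IsStarProjection Q) :
    frob (A - P * Ak * Q) ^ 2 ≤
      frob (A - Ak) ^ 2 + k * spec ((1 - P) * A) ^ 2 + 3 * (k * spec (A * (1 - Q)) ^ 2) := by
  have hsplit : A - P * Ak * Q = (A - Ak) + ((1 - P) * Ak + P * Ak * (1 - Q)) := by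
    simp only [Matrix.sub_mul, Matrix.mul_sub, Matrix.one_mul, Matrix.mul_one]
    abel
  have hE1 := frob_sq_mul_lowRank_le hVk hAkV (1 - P)
  have hE2 : frob (P * Ak * (1 - Q)) ^ 2 ≤ k * spec (A * (1 - Q)) ^ 2 := by
    rw [Matrix.mul_assoc]
    exact (pow_le_pow_left₀ (frob_nonneg _) (hP.frob_mul_le _) 2).trans
      (frob_sq_lowRank_mul_le hUk hAkU _)
  have hE1E2 := hP.trace_transpose_one_sub_mul_mul_mul_eq_zero Ak (Ak * (1 - Q))
  rw [← Matrix.mul_assoc P] at hE1E2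
  rw [hsplit, frob_add_sq, frob_add_sq, Matrix.mul_add, trace_add,
    trace_transpose_sub_lowRank_mul_lowRank_eq_zero hVk hAkV, hE1E2]
  linarith [trace_transpose_sub_lowRank_mul_proj_le hUk hAkU hP hQ]

end LowRank

theorem stmt_16_general {m n k c r : ℕ} (hk : 0 < k) (ε : ℝ)
    (A Ak : Matrix (Fin m) (Fin n) ℝ)
    (Uk : Matrix (Fin m) (Fin k) ℝ) (Vk : Matrix (Fin n) (Fin k) ℝ)
    (hUk : Ukᵀ * Uk = 1) (hVk : Vkᵀ * Vk = 1)
    (hAkU : Ak = Uk * Ukᵀ * A) (hAkV : Ak = A * (Vk * Vkᵀ))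
    (UC : Matrix (Fin m) (Fin c) ℝ) (VR : Matrix (Fin n) (Fin r) ℝ)
    (hUC : UCᵀ * UC = 1) (hVR : VRᵀ * VR = 1)
    (hPSF : spec ((1 - UC * UCᵀ) * A) ^ 2 ≤ (ε / (k : ℝ)) * frob (A - Ak) ^ 2)
    (hQSF : spec (A * (1 - VR * VRᵀ)) ^ 2 ≤ (ε / (k : ℝ)) * frob (A - Ak) ^ 2) :
    ∃ X : Matrix (Fin c) (Fin r) ℝ,
      frob (A - UC * X * VRᵀ) ≤ Real.sqrt (1 + 4 * ε) * frob (A - Ak) := by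
  refine ⟨UCᵀ * Ak * VR, ?_⟩
  have hkR : (0 : ℝ) < k := Nat.cast_pos.mpr hk
  have hsq := frob_sq_sub_proj_mul_lowRank_mul_proj_le hUk hVk hAkU hAkV
    (isStarProjection_mul_transpose_of_orthonormal hUC)
    (isStarProjection_mul_transpose_of_orthonormal hVR)
  rw [div_mul_eq_mul_div, le_div_iff₀ hkR] at hPSF hQSF
  rw [show UC * (UCᵀ * Ak * VR) * VRᵀ = UC * UCᵀ * Ak * (VR * VRᵀ) by
    simp only [Matrix.mul_assoc]]
  calc frob (A - UC * UCᵀ * Ak * (VR * VRᵀ))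
      = √(frob (A - UC * UCᵀ * Ak * (VR * VRᵀ)) ^ 2) := (Real.sqrt_sq (frob_nonneg _)).symm
    _ ≤ √((1 + 4 * ε) * frob (A - Ak) ^ 2) := Real.sqrt_le_sqrt (by linarith)
    _ = √(1 + 4 * ε) * frob (A - Ak) := by
      rw [Real.sqrt_mul' _ (sq_nonneg _), Real.sqrt_sq (frob_nonneg _)]

theorem stmt_16 {m n k c r : ℕ} (hk : 0 < k) (ε : ℝ) (hε : 0 < ε)
    (A Ak : Matrix (Fin m) (Fin n) ℝ)
    (Uk : Matrix (Fin m) (Fin k) ℝ) (Vk : Matrix (Fin n) (Fin k) ℝ)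
    (hUk : Ukᵀ * Uk = 1) (hVk : Vkᵀ * Vk = 1)
    (hAkU : Ak = Uk * Ukᵀ * A) (hAkV : Ak = A * (Vk * Vkᵀ))
    (hbest : ∀ B : Matrix (Fin m) (Fin n) ℝ, B.rank ≤ k → frob (A - Ak) ≤ frob (A - B))
    (UC : Matrix (Fin m) (Fin c) ℝ) (VR : Matrix (Fin n) (Fin r) ℝ)
    (hUC : UCᵀ * UC = 1) (hVR : VRᵀ * VR = 1)
    (hPSF : spec ((1 - UC * UCᵀ) * A) ^ 2 ≤ (ε / (k : ℝ)) * frob (A - Ak) ^ 2)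
    (hQSF : spec (A * (1 - VR * VRᵀ)) ^ 2 ≤ (ε / (k : ℝ)) * frob (A - Ak) ^ 2) :
    ∃ X : Matrix (Fin c) (Fin r) ℝ,
      frob (A - UC * X * VRᵀ) ≤ Real.sqrt (1 + 4 * ε) * frob (A - Ak) :=
  stmt_16_general hk ε A Ak Uk Vk hUk hVk hAkU hAkV UC VR hUC hVR hPSF hQSF
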